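/- arXiv:1706.06244 — 10 statements merged into one kernel-verified Lean document; each statement's English description precedes it below -/
import Mathlib

section
/- For every ρ > 0 and every a > 0, the Legendre transform of the logarithmic moment generating function of a geometric distribution of mean ρ has the explicit form: sup_{λ ∈ ℝ} { λ·a − log 𝓜_ρ(λ) } = a·log( a(1+ρ) / (ρ(1+a)) ) − log( (1+a)/(1+ρ) ). -/
/-!
Substituting `t = e^λ`, the objective is `a log t + log (1 + ρ - ρ t)`, concave in `t` and stationary
at `t₀ = a(1+ρ)/(ρ(1+a))`, where `1 + ρ - ρ t₀ = (1+ρ)/(1+a)`. Maximality at `t₀` is the tangent-line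
bound `log s ≤ s - 1` applied to `t/t₀` and to `(1 + ρ - ρ t)/(1 + ρ - ρ t₀)` with weights `a` and `1`:
these weighted ratios always sum to exactly `a + 1`.
-/

open Real

theorem mul_log_add_mul_log_le {a b x y x₀ y₀ : ℝ} (ha : 0 ≤ a) (hb : 0 ≤ b) (hx : 0 < x)
    (hy : 0 < y) (hx₀ : 0 < x₀) (hy₀ : 0 < y₀) (h : a * (x / x₀) + b * (y / y₀) = a + b) :
    a * log x + b * log y ≤ a * log x₀ + b * log y₀ := by
  have hx' := log_le_sub_one_of_pos (div_pos hx hx₀)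
  have hy' := log_le_sub_one_of_pos (div_pos hy hy₀)
  rw [log_div hx.ne' hx₀.ne'] at hx'
  rw [log_div hy.ne' hy₀.ne'] at hy'
  linear_combination mul_le_mul_of_nonneg_left hx' ha + mul_le_mul_of_nonneg_left hy' hb + h

section GeometricLegendre

variable {ρ a : ℝ}

theorem geometric_mgf_denom_pos (hρ : 0 < ρ) {lam : ℝ} (h : lam < log ((1 + ρ) / ρ)) :
    0 < 1 - ρ * (exp lam - 1) := by
  rw [lt_log_iff_exp_lt (by positivity), lt_div_iff₀ hρ] at h
  linarith

theorem geometric_argmax_lt (hρ : 0 < ρ) (ha : 0 ≤ a) :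
    a * (1 + ρ) / (ρ * (1 + a)) < (1 + ρ) / ρ := by
  rw [div_lt_div_iff₀ (by positivity) hρ]
  nlinarith

theorem one_sub_mul_geometric_argmax_sub_one (hρ : ρ ≠ 0) (ha : 1 + a ≠ 0) :
    1 - ρ * (a * (1 + ρ) / (ρ * (1 + a)) - 1) = (1 + ρ) / (1 + a) := by
  field_simp
  ring

theorem geometric_legendre_objective_le (hρ : 0 < ρ) (ha : 0 < a) {lam : ℝ}
    (h : lam < log ((1 + ρ) / ρ)) :
    lam * a - log (1 - ρ * (exp lam - 1))⁻¹ ≤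
      a * log (a * (1 + ρ) / (ρ * (1 + a))) + log ((1 + ρ) / (1 + a)) := by
  have key := mul_log_add_mul_log_le ha.le zero_le_one (exp_pos lam)
    (geometric_mgf_denom_pos hρ h) (by positivity : 0 < a * (1 + ρ) / (ρ * (1 + a)))
    (by positivity : 0 < (1 + ρ) / (1 + a)) (by field_simp; ring)
  calc lam * a - log (1 - ρ * (exp lam - 1))⁻¹
      = a * log (exp lam) + 1 * log (1 - ρ * (exp lam - 1)) := by rw [log_inv, log_exp]; ring
    _ ≤ _ := key
    _ = _ := by ring

theorem geometric_legendre_objective_argmax (hρ : 0 < ρ) (ha : 0 < a) :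
    log (a * (1 + ρ) / (ρ * (1 + a))) * a
        - log (1 - ρ * (exp (log (a * (1 + ρ) / (ρ * (1 + a)))) - 1))⁻¹ =
      a * log (a * (1 + ρ) / (ρ * (1 + a))) + log ((1 + ρ) / (1 + a)) := by
  rw [exp_log (by positivity), one_sub_mul_geometric_argmax_sub_one hρ.ne' (by positivity),
    log_inv]
  ring

end GeometricLegendre

/-- For every `ρ > 0` and `a > 0`, the Legendre transform of the
logarithmic moment generating function of a geometric distribution of mean `ρ`
(whose mgf is `𝓜_ρ(λ) = (1 - ρ(e^λ - 1))⁻¹` for `λ < log((1+ρ)/ρ)`, `+∞` otherwise,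
so the supremum may be taken over `λ < log((1+ρ)/ρ)`) equals
`a·log(a(1+ρ)/(ρ(1+a))) − log((1+a)/(1+ρ))`. -/
theorem legendre_transform_geometric_mgf (ρ a : ℝ) (hρ : 0 < ρ) (ha : 0 < a) :
    sSup ((fun lam : ℝ => lam * a - Real.log (1 - ρ * (Real.exp lam - 1))⁻¹) ''
        {lam : ℝ | lam < Real.log ((1 + ρ) / ρ)}) =
      a * Real.log (a * (1 + ρ) / (ρ * (1 + a))) - Real.log ((1 + a) / (1 + ρ)) := by
  rw [sub_eq_add_neg, ← log_inv, inv_div]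
  refine IsGreatest.csSup_eq ⟨⟨_, ?_, geometric_legendre_objective_argmax hρ ha⟩, ?_⟩
  · exact log_lt_log (by positivity) (geometric_argmax_lt hρ ha.le)
  · rintro _ ⟨lam, hlam, rfl⟩
    exact geometric_legendre_objective_le hρ ha hlam
end

section
/- Fix α > 0, ρ > 0 and a > 0. Then lim_{n → ∞} 𝓘_{ρ n^α}(a n^α) = a/ρ − log(a/ρ) − 1 = I_ρ(a); that is, the geometric large deviations rate function, evaluated along the scaling (ρ n^α, a n^α), converges as n → ∞ (n ranging over the positive integers) to the large deviations rate function of an exponential distribution of mean ρ. -/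
open Filter Real Topology

/-- The large deviations rate function of a geometric distribution of mean `ρ`. -/
noncomputable def geomRate (ρ a : ℝ) : ℝ :=
  a * Real.log (a * (1 + ρ) / (ρ * (1 + a))) - Real.log ((1 + a) / (1 + ρ))

/-- The large deviations rate function of an exponential distribution of mean `ρ`. -/
noncomputable def expRate (ρ a : ℝ) : ℝ :=
  a / ρ - 1 - Real.log (a / ρ)

/-!
Writing `r = a/ρ`, the geometric rate function equals `(1 + a) log (1 + (r - 1)/(1 + a)) - log r`.
Under the scaling `(ρ, a) ↦ (ρ t, a t)` the ratio `r` is unchanged, and the first term is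
`x log (1 + (r - 1)/x)` with `x = 1 + a t → ∞`, which tends to `r - 1`. Hence the limit is
`r - 1 - log r`, the exponential rate function.
-/

theorem geomRate_eq {ρ a : ℝ} (hρ : 0 < ρ) (ha : 0 < a) :
    geomRate ρ a = (1 + a) * log (1 + (a / ρ - 1) / (1 + a)) - log (a / ρ) := by
  have harg : 1 + (a / ρ - 1) / (1 + a) = a * (1 + ρ) / (ρ * (1 + a)) := by
    field_simp
    ring
  have hratio : (1 + a) / (1 + ρ) = (a / ρ) / (a * (1 + ρ) / (ρ * (1 + a))) := by
    field_simp
  rw [geomRate, harg, hratio, log_div (x := a / ρ) (by positivity) (by positivity)]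
  ring

theorem tendsto_geomRate_mul_atTop {ρ a : ℝ} (hρ : 0 < ρ) (ha : 0 < a) :
    Tendsto (fun t : ℝ => geomRate (ρ * t) (a * t)) atTop (𝓝 (expRate ρ a)) := by
  have hx : Tendsto (fun t : ℝ => 1 + a * t) atTop atTop :=
    tendsto_atTop_add_const_left _ _ (tendsto_id.const_mul_atTop ha)
  have hlim := ((tendsto_mul_log_one_add_div_atTop (a / ρ - 1)).comp hx).sub_const (log (a / ρ))
  refine hlim.congr' ?_
  filter_upwards [eventually_gt_atTop 0] with t ht
  rw [geomRate_eq (by positivity) (by positivity), mul_div_mul_right _ _ ht.ne']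
  rfl

/-- for `α > 0`, `ρ > 0`, `a > 0`, the geometric rate function evaluated
along the scaling `(ρ n^α, a n^α)` converges, as `n → ∞`, to the rate function of an
exponential distribution of mean `ρ`, namely `a/ρ − log(a/ρ) − 1`. -/
theorem geomRate_tendsto_expRate (α ρ a : ℝ) (hα : 0 < α) (hρ : 0 < ρ) (ha : 0 < a) :
    Filter.Tendsto
      (fun n : ℕ => geomRate (ρ * (n : ℝ) ^ α) (a * (n : ℝ) ^ α))
      Filter.atTop
      (nhds (a / ρ - Real.log (a / ρ) - 1)) := by
  have hpow : Tendsto (fun n : ℕ => (n : ℝ) ^ α) atTop atTop :=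
    (tendsto_rpow_atTop hα).comp tendsto_natCast_atTop_atTop
  rw [sub_right_comm]
  exact (tendsto_geomRate_mul_atTop hρ ha).comp hpow
end

section
/- Fix α > 0 and n a positive integer. For every ρ > 0 and every a with 0 < a ≤ ρ, one has 𝓘_{ρ n^α}(a n^α) ≥ I_ρ(a) − (a − ρ)² / ( a ρ (1 + ρ n^α) ). -/
/-! With `y = a(1+ρ)/(ρ(1+a))` one has `𝓘_ρ(a) = (1+a) log y − log(a/ρ)`, and `log y ≥ 1 − 1/y`
turns this into `𝓘_ρ(a) ≥ I_ρ(a) − (a−ρ)²/(aρ(1+ρ))` for all `ρ, a > 0`. Since `I_ρ(a)` only depends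
on `a/ρ`, applying this at `(ρ n^α, a n^α)` gives the bound. -/

open Real

lemma expRate_mul_right (ρ a : ℝ) {t : ℝ} (ht : t ≠ 0) : expRate (ρ * t) (a * t) = expRate ρ a := by
  simp only [expRate, mul_div_mul_right a ρ ht]

lemma geomRate_eq_mul_log_sub_log {ρ a : ℝ} (hρ : 0 < ρ) (ha : 0 < a) :
    geomRate ρ a = (1 + a) * log (a * (1 + ρ) / (ρ * (1 + a))) - log (a / ρ) := by
  have h1ρ : 0 < 1 + ρ := by linarith
  have h1a : 0 < 1 + a := by linarith
  simp only [geomRate]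
  rw [log_div (by positivity) (by positivity), log_div h1a.ne' h1ρ.ne', log_div ha.ne' hρ.ne',
    log_mul ha.ne' h1ρ.ne', log_mul hρ.ne' h1a.ne']
  ring

lemma expRate_sub_le_geomRate {ρ a : ℝ} (hρ : 0 < ρ) (ha : 0 < a) :
    expRate ρ a - (a - ρ) ^ 2 / (a * ρ * (1 + ρ)) ≤ geomRate ρ a := by
  set y := a * (1 + ρ) / (ρ * (1 + a)) with hy
  have hy_pos : 0 < y := by positivity
  have h_tangent : (1 + a) * (1 - y⁻¹) ≤ (1 + a) * log y :=
    mul_le_mul_of_nonneg_left (one_sub_inv_le_log_of_pos hy_pos) (by positivity)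
  have h_eq : (1 + a) * (1 - y⁻¹) = a / ρ - 1 - (a - ρ) ^ 2 / (a * ρ * (1 + ρ)) := by
    rw [hy, inv_div]
    field_simp
    ring
  rw [geomRate_eq_mul_log_sub_log hρ ha, expRate]
  linarith

theorem geomRate_lower_bound_lower_tail_general (α : ℝ) (n : ℕ) (hn : 0 < n)
    (ρ a : ℝ) (hρ : 0 < ρ) (ha : 0 < a) :
    geomRate (ρ * (n : ℝ) ^ α) (a * (n : ℝ) ^ α) ≥
      expRate ρ a - (a - ρ) ^ 2 / (a * ρ * (1 + ρ * (n : ℝ) ^ α)) := by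
  set N := (n : ℝ) ^ α
  have hN : 0 < N := rpow_pos_of_pos (Nat.cast_pos.mpr hn) α
  have h_scaled := expRate_sub_le_geomRate (mul_pos hρ hN) (mul_pos ha hN)
  have h_error : (a * N - ρ * N) ^ 2 / (a * N * (ρ * N) * (1 + ρ * N)) =
      (a - ρ) ^ 2 / (a * ρ * (1 + ρ * N)) := by
    field_simp
  rwa [expRate_mul_right ρ a hN.ne', h_error] at h_scaled

/-- for `α > 0`, `n` a positive integer, `ρ > 0` and `0 < a ≤ ρ`,
`𝓘_{ρ n^α}(a n^α) ≥ I_ρ(a) − (a − ρ)² / (a ρ (1 + ρ n^α))`. -/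
theorem geomRate_lower_bound_lower_tail (α : ℝ) (hα : 0 < α) (n : ℕ) (hn : 0 < n)
    (ρ a : ℝ) (hρ : 0 < ρ) (ha : 0 < a) (haρ : a ≤ ρ) :
    geomRate (ρ * (n : ℝ) ^ α) (a * (n : ℝ) ^ α) ≥
      expRate ρ a - (a - ρ) ^ 2 / (a * ρ * (1 + ρ * (n : ℝ) ^ α)) :=
  geomRate_lower_bound_lower_tail_general α n hn ρ a hρ ha
end

section
/- Let 0 < ρ ≤ ρ⁺ and set K⁺ = (ρ⁺/ρ)². Then for every a ≥ K⁺·ρ, one has I_ρ(a) ≤ 16·K⁺·I_{ρ⁺}(a). -/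
/-!
Write `s = ρ⁺/ρ ≥ 1` and `t = a/ρ⁺ ≥ s`, so that `a/ρ = s t`. The bounds `1 - 1/x ≤ log x` and
`log x ≤ 2 (√x - 1)` sandwich the rate function: `I_ρ(a) ≤ (st - 1)²/(st)` and
`I_{ρ⁺}(a) ≥ (√t - 1)²`. Since `st - 1 ≤ 2s(t - 1)` and `(√t + 1)² ≤ 4t`, this gives even
`I_ρ(a) ≤ 16 s I_{ρ⁺}(a)`.
-/

open Real

theorem expRate_le_sq_div {ρ a : ℝ} (h : 0 < a / ρ) :
    expRate ρ a ≤ (a / ρ - 1) ^ 2 / (a / ρ) := by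
  set x := a / ρ
  have hlog := one_sub_inv_le_log_of_pos h
  have hsq : (x - 1) ^ 2 / x = x - 2 + x⁻¹ := by
    field_simp
    ring
  rw [expRate, hsq]
  linarith

theorem sq_sqrt_sub_one_le_expRate {ρ a : ℝ} (h : 0 < a / ρ) :
    (√(a / ρ) - 1) ^ 2 ≤ expRate ρ a := by
  have hlog : log (a / ρ) ≤ 2 * (√(a / ρ) - 1) := by
    have := log_le_sub_one_of_pos (sqrt_pos.2 h)
    rw [log_sqrt h.le] at this
    linarith
  have hsq : (√(a / ρ) - 1) ^ 2 = a / ρ - 2 * √(a / ρ) + 1 := by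
    rw [sub_sq, sq_sqrt h.le]
    ring
  rw [expRate, hsq]
  linarith

theorem sq_mul_sub_one_div_le {s t : ℝ} (hs : 1 ≤ s) (hst : s ≤ t) :
    (s * t - 1) ^ 2 / (s * t) ≤ 16 * s * (√t - 1) ^ 2 := by
  have ht : 0 < t := by linarith
  have hsqrt : (√t + 1) ^ 2 ≤ 4 * t := by
    nlinarith [sq_sqrt ht.le, one_le_sqrt.2 (hs.trans hst)]
  have hnum : s * t - 1 ≤ 2 * s * (t - 1) := by nlinarith
  have hfactor : (t - 1) ^ 2 = (√t - 1) ^ 2 * (√t + 1) ^ 2 := by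
    linear_combination (2 - t - √t ^ 2) * sq_sqrt ht.le
  rw [div_le_iff₀ (by positivity)]
  calc (s * t - 1) ^ 2 ≤ (2 * s * (t - 1)) ^ 2 := pow_le_pow_left₀ (by nlinarith) hnum 2
    _ = 4 * s ^ 2 * ((√t - 1) ^ 2 * (√t + 1) ^ 2) := by rw [← hfactor]; ring
    _ ≤ 4 * s ^ 2 * ((√t - 1) ^ 2 * (4 * t)) := by gcongr
    _ = 16 * s * (√t - 1) ^ 2 * (s * t) := by ring

theorem expRate_le_mul_expRate {ρ ρplus a : ℝ} (hρ : 0 < ρ) (hρplus : ρ ≤ ρplus)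
    (ha : (ρplus / ρ) ^ 2 * ρ ≤ a) :
    expRate ρ a ≤ 16 * (ρplus / ρ) * expRate ρplus a := by
  have hρplus_pos : 0 < ρplus := hρ.trans_le hρplus
  have hs : 1 ≤ ρplus / ρ := (one_le_div hρ).2 hρplus
  have hst : ρplus / ρ ≤ a / ρplus := by
    have hsq : ρplus / ρ * ρplus = (ρplus / ρ) ^ 2 * ρ := by
      field_simp
    rw [le_div_iff₀ hρplus_pos, hsq]
    exact ha
  have hprod : a / ρ = ρplus / ρ * (a / ρplus) := by
    field_simp
  have ht : 0 < a / ρplus := by linarith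
  calc expRate ρ a ≤ (a / ρ - 1) ^ 2 / (a / ρ) := expRate_le_sq_div (by rw [hprod]; positivity)
    _ ≤ 16 * (ρplus / ρ) * (√(a / ρplus) - 1) ^ 2 := by
      rw [hprod]
      exact sq_mul_sub_one_div_le hs hst
    _ ≤ 16 * (ρplus / ρ) * expRate ρplus a := by
      gcongr
      exact sq_sqrt_sub_one_le_expRate ht

/-- let `0 < ρ ≤ ρ⁺` and `K⁺ = (ρ⁺/ρ)²`; then for every `a ≥ K⁺ ρ`,
`I_ρ(a) ≤ 16 K⁺ I_{ρ⁺}(a)`. -/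
theorem expRate_comparison (ρ ρplus : ℝ) (hρ : 0 < ρ) (hρplus : ρ ≤ ρplus)
    (a : ℝ) (ha : (ρplus / ρ) ^ 2 * ρ ≤ a) :
    expRate ρ a ≤ 16 * (ρplus / ρ) ^ 2 * expRate ρplus a := by
  have hs : 1 ≤ ρplus / ρ := (one_le_div hρ).2 hρplus
  have ha_pos : 0 < a := hρ.trans_le ((le_mul_of_one_le_left hρ.le (one_le_pow₀ hs)).trans ha)
  have hrate : 0 ≤ expRate ρplus a :=
    (sq_nonneg _).trans (sq_sqrt_sub_one_le_expRate (div_pos ha_pos (hρ.trans_le hρplus)))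
  calc expRate ρ a ≤ 16 * (ρplus / ρ) * expRate ρplus a := expRate_le_mul_expRate hρ hρplus ha
    _ ≤ 16 * (ρplus / ρ) ^ 2 * expRate ρplus a := by gcongr; exact le_self_pow₀ hs two_ne_zero
end

section
/- Let I(x) = x − 1 − log x for x > 0 and ψ(x) = min{x, x²} for x ≥ 0. Then for every x ≥ 1, (1/4)·ψ(x − 1) ≤ I(x) ≤ ψ(x − 1). -/
/-! Both bounds come from the two-sided estimate `(x - 1)² / (2x) ≤ I(x) ≤ (x - 1)² / x` for
`x ≥ 1`: the upper one from `log x ≥ 1 - 1/x`, the lower one from `log x ≤ sinh (log x) = (x - 1/x)/2`.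
With `a = x - 1 ≥ 0` we have `max 1 a ≤ 1 + a ≤ 2 max 1 a` and `a² / max 1 a = ψ(a)`. -/

namespace Real

lemma log_le_sub_inv_div_two {x : ℝ} (hx : 1 ≤ x) : log x ≤ (x - x⁻¹) / 2 := by
  rw [← sinh_log (by linarith)]
  exact self_le_sinh_iff.mpr (log_nonneg hx)

lemma sq_div_le_two_mul_sub_one_sub_log {x : ℝ} (hx : 1 ≤ x) :
    (x - 1) ^ 2 / x ≤ 2 * (x - 1 - log x) := by
  have hx0 : x ≠ 0 := by positivity
  calc (x - 1) ^ 2 / x = 2 * (x - 1 - (x - x⁻¹) / 2) := by field_simp; ring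
    _ ≤ 2 * (x - 1 - log x) := by linarith [log_le_sub_inv_div_two hx]

lemma sub_one_sub_log_le_sq_div {x : ℝ} (hx : 0 < x) : x - 1 - log x ≤ (x - 1) ^ 2 / x :=
  calc x - 1 - log x ≤ x - 1 - (1 - x⁻¹) := by linarith [one_sub_inv_le_log_of_pos hx]
    _ = (x - 1) ^ 2 / x := by field_simp

end Real

lemma min_self_sq_le_two_mul_sq_div {a : ℝ} (ha : 0 ≤ a) :
    min a (a ^ 2) ≤ 2 * (a ^ 2 / (a + 1)) := by
  rw [mul_div_assoc', le_div_iff₀ (by positivity)]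
  rcases le_total a 1 with h | h
  · nlinarith [min_le_right a (a ^ 2)]
  · nlinarith [min_le_left a (a ^ 2)]

lemma sq_div_le_min_self_sq {a : ℝ} (ha : 0 ≤ a) : a ^ 2 / (a + 1) ≤ min a (a ^ 2) := by
  rw [div_le_iff₀ (by positivity)]
  rcases le_total a 1 with h | h
  · rw [min_eq_right (by nlinarith)]
    nlinarith
  · rw [min_eq_left (by nlinarith)]
    nlinarith

/-- with `I(x) = x − 1 − log x` and `ψ(x) = min{x, x²}`, for every `x ≥ 1`,
`(1/4) ψ(x−1) ≤ I(x) ≤ ψ(x−1)`. -/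
theorem rate_function_psi_bounds (x : ℝ) (hx : 1 ≤ x) :
    (1 / 4) * min (x - 1) ((x - 1) ^ 2) ≤ x - 1 - Real.log x ∧
      x - 1 - Real.log x ≤ min (x - 1) ((x - 1) ^ 2) := by
  have ha : 0 ≤ x - 1 := sub_nonneg.mpr hx
  have hlower := Real.sq_div_le_two_mul_sub_one_sub_log hx
  have hupper := Real.sub_one_sub_log_le_sq_div (by linarith : 0 < x)
  have hpsi_le := min_self_sq_le_two_mul_sq_div ha
  have hpsi_ge := sq_div_le_min_self_sq ha
  rw [sub_add_cancel] at hpsi_le hpsi_ge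
  constructor <;> linarith
end

section
/- Let ψ(x) = min{x, x²} for x ≥ 0. Then for every λ ∈ (0,1] and every x ≥ 1/λ², one has ψ(x − 1) ≤ (4/λ²)·ψ(λ x − 1). -/
/-! ψ is monotone on `[0, ∞)` and satisfies `ψ(c t) ≤ c² ψ(t)` for `c ≥ 1`, `t ≥ 0`.
Since `λ(2 - λ) ≤ 1 ≤ λ² x`, we get `x - 1 ≤ (2/λ)(λx - 1)`, so
`ψ(x - 1) ≤ ψ((2/λ)(λx - 1)) ≤ (2/λ)² ψ(λx - 1)`. -/

noncomputable section

def psi (t : ℝ) : ℝ := min t (t ^ 2)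

theorem psi_monotoneOn : MonotoneOn psi (Set.Ici 0) := fun _ ht _ _ hts =>
  min_le_min hts (pow_le_pow_left₀ ht hts 2)

theorem psi_mul_le_sq_mul {c t : ℝ} (hc : 1 ≤ c) (ht : 0 ≤ t) :
    psi (c * t) ≤ c ^ 2 * psi t := by
  have hlin : c * t ≤ c ^ 2 * t := mul_le_mul_of_nonneg_right (by nlinarith) ht
  calc psi (c * t) = min (c * t) (c ^ 2 * t ^ 2) := by rw [psi, mul_pow]
    _ ≤ min (c ^ 2 * t) (c ^ 2 * t ^ 2) := min_le_min_right _ hlin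
    _ = c ^ 2 * psi t := (mul_min_of_nonneg _ _ (sq_nonneg c)).symm

theorem sub_one_le_two_div_mul {lam x : ℝ} (hlam : 0 < lam) (hx : 1 ≤ lam ^ 2 * x) :
    x - 1 ≤ 2 / lam * (lam * x - 1) := by
  rw [div_mul_eq_mul_div, le_div_iff₀ hlam]
  nlinarith [sq_nonneg (1 - lam)]

end

/-- with `ψ(x) = min{x, x²}`, for every `λ ∈ (0,1]` and `x ≥ 1/λ²`,
`ψ(x − 1) ≤ (4/λ²) ψ(λx − 1)`. -/
theorem psi_scaling_inequality (lam x : ℝ) (hlam0 : 0 < lam) (hlam1 : lam ≤ 1)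
    (hx : 1 / lam ^ 2 ≤ x) :
    min (x - 1) ((x - 1) ^ 2) ≤
      4 / lam ^ 2 * min (lam * x - 1) ((lam * x - 1) ^ 2) := by
  have hsq : 1 ≤ lam ^ 2 * x := by rwa [div_le_iff₀' (by positivity)] at hx
  have hx1 : 0 ≤ x - 1 := by
    have hx0 : 0 < x := lt_of_lt_of_le (by positivity) hx
    nlinarith [pow_le_one₀ hlam0.le hlam1 (n := 2)]
  have hy : 0 ≤ lam * x - 1 := by nlinarith
  have hc : 1 ≤ 2 / lam := by rw [le_div_iff₀ hlam0]; linarith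
  calc psi (x - 1) ≤ psi (2 / lam * (lam * x - 1)) :=
        psi_monotoneOn hx1 (mul_nonneg (by positivity) hy) (sub_one_le_two_div_mul hlam0 hsq)
    _ ≤ (2 / lam) ^ 2 * psi (lam * x - 1) := psi_mul_le_sq_mul hc hy
    _ = 4 / lam ^ 2 * psi (lam * x - 1) := by rw [div_pow]; norm_num
end

section
/- Fix α ≥ 0 and a positive integer n, and define M_n(u,v) = φ_n(v) − φ_n(u) − φ_n'(u)·(v − u) for u, v ≥ 0. Then for every ε > 0 and ε₀ > 0 there exists a constant C = C(ε, ε₀) > 0 (one may take C = max{4/ε, 2/(ε₀ ε²)}), independent of n, such that |M_n(u,v)| ≤ C·I_u(v) for every u ∈ [ε, ε^{-1}] and every v ≥ ε₀. -/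
/-- `φ_n(u) = n^α φ(n^α u)` with `φ(ρ) = ρ/(1+ρ)`. -/
noncomputable def phin (α : ℝ) (n : ℕ) (u : ℝ) : ℝ :=
  (n : ℝ) ^ α * ((n : ℝ) ^ α * u / (1 + (n : ℝ) ^ α * u))

/-- The derivative `φ_n'(u) = (n^{−α} + u)^{−2}`. -/
noncomputable def phin' (α : ℝ) (n : ℕ) (u : ℝ) : ℝ :=
  (((n : ℝ) ^ (-α) + u) ^ 2)⁻¹

/-!
`M_n` is the Bregman divergence of the concave function `φ_n`; it equals
`-n^{3α} (v - u)² / ((1 + n^α u)² (1 + n^α v))`, whose absolute value is at most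
`(v - u)² / (u² v)` whatever `n` is. On the other side, `t - 1 - log t ≥ (t - 1)² / (2 max 1 t)`,
so `I_u(v) ≥ (v - u)² / (2 u max u v)` and `|M_n(u,v)| ≤ 2 max (u⁻¹, v⁻¹) I_u(v)`. For
`ε ≤ u ≤ ε⁻¹` (which forces `ε ≤ 1`) and `v ≥ ε₀` this coefficient is at most `C`.
-/

namespace Real

lemma log_le_sub_inv_div_two_s11 {t : ℝ} (ht : 1 ≤ t) : log t ≤ (t - t⁻¹) / 2 := by
  rw [← sinh_log (by linarith)]
  exact self_le_sinh_iff.mpr (log_nonneg ht)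

lemma log_le_sub_one_sub_sq_div_two {t : ℝ} (ht : 0 < t) (ht1 : t ≤ 1) :
    log t ≤ t - 1 - (t - 1) ^ 2 / 2 := by
  have hx : |1 - t| < 1 := by rw [abs_lt]; constructor <;> linarith
  -- the first two terms of `-log (1 - x) = ∑ x ^ (k + 1) / (k + 1)`, a series of nonnegative terms
  have hsum := sum_le_hasSum (Finset.range 2) (fun k _ => by
    have : 0 ≤ 1 - t := by linarith
    positivity) (hasSum_pow_div_log_of_abs_lt_one hx)
  norm_num [Finset.sum_range_succ] at hsum
  nlinarith

lemma sq_sub_one_div_le_sub_one_sub_log {t : ℝ} (ht : 0 < t) :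
    (t - 1) ^ 2 / (2 * max 1 t) ≤ t - 1 - log t := by
  rcases le_total 1 t with h1t | ht1
  · have := log_le_sub_inv_div_two_s11 h1t
    rw [max_eq_right h1t]
    have : (t - 1) ^ 2 / (2 * t) = t - 1 - (t - t⁻¹) / 2 := by field_simp; ring
    linarith
  · have := log_le_sub_one_sub_sq_div_two ht ht1
    rw [max_eq_left ht1]
    linarith

end Real

lemma expRate_nonneg {ρ a : ℝ} (hρ : 0 < ρ) (ha : 0 < a) : 0 ≤ expRate ρ a := by
  have := Real.log_le_sub_one_of_pos (div_pos ha hρ)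
  unfold expRate
  linarith

lemma sq_sub_div_le_expRate {ρ a : ℝ} (hρ : 0 < ρ) (ha : 0 < a) :
    (a - ρ) ^ 2 / (2 * ρ * max ρ a) ≤ expRate ρ a := by
  have h := Real.sq_sub_one_div_le_sub_one_sub_log (div_pos ha hρ)
  have hmax : max 1 (a / ρ) = max ρ a / ρ := by
    rw [← max_div_div_right hρ.le, div_self hρ.ne']
  rw [hmax] at h
  unfold expRate
  convert h using 1
  have : 0 < max ρ a := lt_max_of_lt_left hρ
  field_simp

lemma phin_sub_phin_sub_phin'_mul_eq (α : ℝ) {n : ℕ} (hn : 0 < n) {u v : ℝ} (hu : 0 ≤ u)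
    (hv : 0 ≤ v) :
    phin α n v - phin α n u - phin' α n u * (v - u)
      = -(((n : ℝ) ^ α) ^ 3 * (v - u) ^ 2 /
          ((1 + (n : ℝ) ^ α * u) ^ 2 * (1 + (n : ℝ) ^ α * v))) := by
  have hA : 0 < (n : ℝ) ^ α := Real.rpow_pos_of_pos (by exact_mod_cast hn) α
  unfold phin phin'
  rw [Real.rpow_neg (Nat.cast_nonneg n)]
  have : ((n : ℝ) ^ α)⁻¹ + u ≠ 0 := by positivity
  have : 1 + (n : ℝ) ^ α * u ≠ 0 := by positivity
  have : 1 + (n : ℝ) ^ α * v ≠ 0 := by positivity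
  field_simp
  ring

lemma abs_phin_sub_phin_sub_phin'_mul_le (α : ℝ) {n : ℕ} (hn : 0 < n) {u v : ℝ} (hu : 0 < u)
    (hv : 0 < v) :
    |phin α n v - phin α n u - phin' α n u * (v - u)| ≤ (v - u) ^ 2 / (u ^ 2 * v) := by
  rw [phin_sub_phin_sub_phin'_mul_eq α hn hu.le hv.le, abs_neg, abs_of_nonneg (by positivity)]
  set A := (n : ℝ) ^ α
  have hA : 0 < A := Real.rpow_pos_of_pos (by exact_mod_cast hn) α
  have hden : A ^ 3 * (u ^ 2 * v) ≤ (1 + A * u) ^ 2 * (1 + A * v) := by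
    have : (A * u) ^ 2 * (A * v) ≤ (1 + A * u) ^ 2 * (1 + A * v) := by
      gcongr <;> linarith
    linarith
  calc A ^ 3 * (v - u) ^ 2 / ((1 + A * u) ^ 2 * (1 + A * v))
      ≤ A ^ 3 * (v - u) ^ 2 / (A ^ 3 * (u ^ 2 * v)) := by gcongr
    _ = (v - u) ^ 2 / (u ^ 2 * v) := mul_div_mul_left _ _ (by positivity)

lemma abs_phin_sub_phin_sub_phin'_mul_le_expRate (α : ℝ) {n : ℕ} (hn : 0 < n) {u v : ℝ}
    (hu : 0 < u) (hv : 0 < v) :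
    |phin α n v - phin α n u - phin' α n u * (v - u)| ≤ 2 * max u⁻¹ v⁻¹ * expRate u v := by
  have hcoef : (v - u) ^ 2 / (u ^ 2 * v)
      = 2 * max u⁻¹ v⁻¹ * ((v - u) ^ 2 / (2 * u * max u v)) := by
    rcases le_total u v with huv | hvu
    · rw [max_eq_left (inv_anti₀ hu huv), max_eq_right huv]
      field_simp
    · rw [max_eq_right (inv_anti₀ hv hvu), max_eq_left hvu]
      field_simp
  calc _ ≤ (v - u) ^ 2 / (u ^ 2 * v) := abs_phin_sub_phin_sub_phin'_mul_le α hn hu hv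
    _ = _ := hcoef
    _ ≤ _ := by gcongr; exact sq_sub_div_le_expRate hu hv

theorem Mn_le_rate_general (α : ℝ) (ε ε₀ : ℝ) (hε : 0 < ε) (hε₀ : 0 < ε₀) :
    ∃ C : ℝ, 0 < C ∧ C = max (4 / ε) (2 / (ε₀ * ε ^ 2)) ∧
      ∀ n : ℕ, 0 < n → ∀ u ∈ Set.Icc ε ε⁻¹, ∀ v : ℝ, ε₀ ≤ v →
        |phin α n v - phin α n u - phin' α n u * (v - u)| ≤ C * expRate u v := by
  refine ⟨_, lt_max_of_lt_left (by positivity), rfl, fun n hn u ⟨hεu, huε⟩ v hv => ?_⟩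
  have hu : 0 < u := hε.trans_le hεu
  have hv : 0 < v := hε₀.trans_le hv
  have hε1 : ε ≤ 1 := by
    by_contra! h
    linarith [inv_lt_one_of_one_lt₀ h]
  have hcoef : 2 * max u⁻¹ v⁻¹ ≤ max (4 / ε) (2 / (ε₀ * ε ^ 2)) := by
    rw [mul_max_of_nonneg _ _ zero_le_two]
    gcongr
    · calc 2 * u⁻¹ ≤ 2 / ε := by rw [← div_eq_mul_inv]; gcongr
        _ ≤ 4 / ε := by gcongr; norm_num
    · calc 2 * v⁻¹ ≤ 2 / ε₀ := by rw [← div_eq_mul_inv]; gcongr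
        _ ≤ 2 / (ε₀ * ε ^ 2) := by
          gcongr
          exact mul_le_of_le_one_right hε₀.le (pow_le_one₀ hε.le hε1)
  exact (abs_phin_sub_phin_sub_phin'_mul_le_expRate α hn hu hv).trans
    (mul_le_mul_of_nonneg_right hcoef (expRate_nonneg hu hv))

/-- with `M_n(u,v) = φ_n(v) − φ_n(u) − φ_n'(u)(v − u)`, for every
`ε, ε₀ > 0` there is a constant `C = C(ε,ε₀) > 0` (one may take
`C = max{4/ε, 2/(ε₀ ε²)}`), independent of `n`, with `|M_n(u,v)| ≤ C I_u(v)` for all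
`u ∈ [ε, ε⁻¹]` and `v ≥ ε₀`. -/
theorem Mn_le_rate (α : ℝ) (hα : 0 ≤ α) (ε ε₀ : ℝ) (hε : 0 < ε) (hε₀ : 0 < ε₀) :
    ∃ C : ℝ, 0 < C ∧ C = max (4 / ε) (2 / (ε₀ * ε ^ 2)) ∧
      ∀ n : ℕ, 0 < n → ∀ u ∈ Set.Icc ε ε⁻¹, ∀ v : ℝ, ε₀ ≤ v →
        |phin α n v - phin α n u - phin' α n u * (v - u)| ≤ C * expRate u v :=
  Mn_le_rate_general α ε ε₀ hε hε₀
end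

section
/- Fix α ≥ 0 and a positive integer n. For every initial condition u₀ : ℤ/nℤ → [0,∞) there exists a unique global solution of the discrete scheme, i.e. a unique function u : [0,∞) → (ℤ/nℤ → [0,∞)) such that u_0 = u₀ and, for every x ∈ ℤ/nℤ, the map t ↦ u_t(x) is differentiable on [0,∞) with (d/dt) u_t(x) = Δ_n( φ_n ∘ u_t )(x) for all t ≥ 0. -/
/-- The discrete Laplacian on `ℤ/nℤ`: `Δ_n f(x) = n² (f(x+1) + f(x−1) − 2 f(x))`. -/
def discLap (n : ℕ) (f : ZMod n → ℝ) (x : ZMod n) : ℝ :=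
  (n : ℝ) ^ 2 * (f (x + 1) + f (x - 1) - 2 * f x)

open Set Filter Topology
open scoped NNReal

theorem image_nonneg_of_deriv_right_nonneg_of_neg {w w' : ℝ → ℝ} {a b : ℝ}
    (hw : ContinuousOn w (Icc a b)) (hw' : ∀ t ∈ Ico a b, HasDerivWithinAt w (w' t) (Ici t) t)
    (ha : 0 ≤ w a) (hneg : ∀ t ∈ Ico a b, w t < 0 → 0 ≤ w' t) :
    ∀ t ∈ Icc a b, 0 ≤ w t := by
  intro t ht
  -- fence `-w` below the barrier `ε (1 + (s - a))`, whose slope `ε` beats `-w'` where they meet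
  have hfence : ∀ ε > 0, -w t ≤ ε * (1 + (t - a)) := by
    intro ε hε
    refine image_le_of_deriv_right_lt_deriv_boundary hw.neg (fun s hs => (hw' s hs).neg)
      (B := fun s => ε * (1 + (s - a))) (B' := fun _ => ε) (by simp; linarith)
      (fun s => by simpa using (((hasDerivAt_id s).sub_const a).const_add 1).const_mul ε)
      (fun s hs heq => ?_) ht
    rw [Pi.neg_apply] at heq
    have hneg' : w s < 0 := by
      have : 0 < ε * (1 + (s - a)) := by have := hs.1; positivity
      linarith
    linarith [hneg s hs hneg']
  have hlim : Tendsto (fun ε : ℝ => ε * (1 + (t - a))) (𝓝[>] 0) (𝓝 0) := by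
    simpa using (tendsto_id.mul_const (1 + (t - a))).mono_left (nhdsWithin_le_nhds (a := (0 : ℝ)))
  have := ge_of_tendsto hlim (eventually_nhdsWithin_of_forall hfence)
  linarith

theorem nonneg_of_hasDerivWithinAt_Ici {ι : Type*} [Fintype ι] {F : (ι → ℝ) → ι → ℝ}
    (hF : ∀ u x, u x < 0 → 0 ≤ F u x) {u : ℝ → ι → ℝ}
    (hu : ∀ t, 0 ≤ t → HasDerivWithinAt u (F (u t)) (Ici 0) t) (h₀ : ∀ x, 0 ≤ u 0 x)
    (t : ℝ) (ht : 0 ≤ t) (x : ι) : 0 ≤ u t x :=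
  image_nonneg_of_deriv_right_nonneg_of_neg (w' := fun s => F (u s) x)
    (fun s hs => (hasDerivWithinAt_pi.1 (hu s hs.1) x).continuousWithinAt.mono Icc_subset_Ici_self)
    (fun s hs => (hasDerivWithinAt_pi.1 (hu s hs.1) x).mono (Ici_subset_Ici.2 hs.1))
    (h₀ x) (fun _ _ hs => hF _ _ hs) t ⟨ht, le_rfl⟩

theorem LipschitzWith.comp_left_pi {ι α β : Type*} [Fintype ι] [PseudoEMetricSpace α]
    [PseudoEMetricSpace β] {g : α → β} {K : ℝ≥0} (hg : LipschitzWith K g) :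
    LipschitzWith K fun u : ι → α => g ∘ u := fun u v =>
  edist_pi_le_iff.2 fun y => (hg (u y) (v y)).trans (mul_le_mul_right (edist_le_pi_edist u v y) K)

section AutonomousODE

variable {E : Type*} [NormedAddCommGroup E] [NormedSpace ℝ E] {f : E → E} {K : ℝ≥0}

theorem eqOn_Icc_of_hasDerivWithinAt_of_lipschitzWith (hf : LipschitzWith K f) {a b : ℝ}
    {u v : ℝ → E} (hu : ∀ t ∈ Icc a b, HasDerivWithinAt u (f (u t)) (Icc a b) t)
    (hv : ∀ t ∈ Icc a b, HasDerivWithinAt v (f (v t)) (Icc a b) t) (ha : u a = v a) :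
    EqOn u v (Icc a b) :=
  ODE_solution_unique (v := fun _ => f) (fun _ => hf)
    (fun t ht => (hu t ht).continuousWithinAt)
    (fun t ht => (hu t (Ico_subset_Icc_self ht)).mono_of_mem_nhdsWithin (Icc_mem_nhdsGE_of_mem ht))
    (fun t ht => (hv t ht).continuousWithinAt)
    (fun t ht => (hv t (Ico_subset_Icc_self ht)).mono_of_mem_nhdsWithin (Icc_mem_nhdsGE_of_mem ht))
    ha

theorem eqOn_Ici_of_hasDerivWithinAt_of_lipschitzWith (hf : LipschitzWith K f)
    {u v : ℝ → E} (hu : ∀ t, 0 ≤ t → HasDerivWithinAt u (f (u t)) (Ici 0) t)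
    (hv : ∀ t, 0 ≤ t → HasDerivWithinAt v (f (v t)) (Ici 0) t) (h₀ : u 0 = v 0) :
    EqOn u v (Ici 0) := fun _ ht =>
  eqOn_Icc_of_hasDerivWithinAt_of_lipschitzWith hf
    (fun s hs => (hu s hs.1).mono Icc_subset_Ici_self)
    (fun s hs => (hv s hs.1).mono Icc_subset_Ici_self) h₀ ⟨ht, le_rfl⟩

variable [CompleteSpace E]

theorem exists_hasDerivWithinAt_Icc_of_lipschitzWith (hf : LipschitzWith K f) {L : ℝ}
    (hL : ∀ x, ‖f x‖ ≤ L) (x₀ : E) {T : ℝ} (hT : 0 ≤ T) :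
    ∃ u : ℝ → E, u 0 = x₀ ∧ ∀ t ∈ Icc 0 T, HasDerivWithinAt u (f (u t)) (Icc 0 T) t :=
  IsPicardLindelof.exists_eq_forall_mem_Icc_hasDerivWithinAt₀
    (IsPicardLindelof.of_time_independent (t₀ := ⟨0, le_rfl, hT⟩) (x₀ := x₀)
      (a := L.toNNReal * T.toNNReal) (r := 0)
      (fun x _ => (hL x).trans (Real.le_coe_toNNReal L)) hf.lipschitzOnWith
      (by simp [hT]))

theorem exists_hasDerivWithinAt_Ici_of_lipschitzWith (hf : LipschitzWith K f) {L : ℝ}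
    (hL : ∀ x, ‖f x‖ ≤ L) (x₀ : E) :
    ∃ u : ℝ → E, u 0 = x₀ ∧ ∀ t, 0 ≤ t → HasDerivWithinAt u (f (u t)) (Ici 0) t := by
  choose F hF₀ hF using fun k : ℕ =>
    exists_hasDerivWithinAt_Icc_of_lipschitzWith hf hL x₀ k.cast_nonneg
  have hFF : ∀ j k : ℕ, j ≤ k → EqOn (F j) (F k) (Icc 0 j) := fun j k hjk =>
    have hsub : Icc (0 : ℝ) j ⊆ Icc 0 k := Icc_subset_Icc_right (Nat.cast_le.2 hjk)
    eqOn_Icc_of_hasDerivWithinAt_of_lipschitzWith hf (hF j)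
      (fun t ht => (hF k t (hsub ht)).mono hsub) ((hF₀ j).trans (hF₀ k).symm)
  set u : ℝ → E := fun t => F ⌈t⌉₊ t
  have hu : ∀ k : ℕ, EqOn u (F k) (Icc 0 k) := fun k t ht =>
    hFF _ _ (Nat.ceil_le.2 ht.2) ⟨ht.1, Nat.le_ceil t⟩
  refine ⟨u, by simpa [u] using hF₀ 0, fun t ht => ?_⟩
  have htk : t < (⌈t⌉₊ + 1 : ℕ) := by push_cast; linarith [Nat.le_ceil t]
  have hmem : Icc 0 ((⌈t⌉₊ + 1 : ℕ) : ℝ) ∈ 𝓝[Ici 0] t := by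
    rw [← Ici_inter_Iic]; exact inter_mem_nhdsWithin _ (Iic_mem_nhds htk)
  have htI : t ∈ Icc 0 ((⌈t⌉₊ + 1 : ℕ) : ℝ) := ⟨ht, htk.le⟩
  rw [hu _ htI]
  exact ((hF _ t htI).mono_of_mem_nhdsWithin hmem).congr_of_eventuallyEq
    (eventuallyEq_of_mem hmem (hu _)) (hu _ htI)

end AutonomousODE

section DiscreteLaplacian

variable (n : ℕ)

theorem discLap_sub (f g : ZMod n → ℝ) : discLap n (f - g) = discLap n f - discLap n g := by
  ext x; simp only [discLap, Pi.sub_apply]; ring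

theorem discLap_nonneg_of_forall_le {f : ZMod n → ℝ} {x : ZMod n} (hx : ∀ y, f x ≤ f y) :
    0 ≤ discLap n f x := by
  unfold discLap
  have := hx (x + 1); have := hx (x - 1)
  exact mul_nonneg (sq_nonneg _) (by linarith)

variable [NeZero n]

theorem norm_discLap_le (f : ZMod n → ℝ) : ‖discLap n f‖ ≤ 4 * n ^ 2 * ‖f‖ := by
  refine (pi_norm_le_iff_of_nonneg (by positivity)).2 fun x => ?_
  have h y : |f y| ≤ ‖f‖ := by simpa using norm_le_pi_norm f y
  have h₁ := abs_le.1 (h (x + 1)); have h₂ := abs_le.1 (h (x - 1)); have h₃ := abs_le.1 (h x)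
  have hsum : |f (x + 1) + f (x - 1) - 2 * f x| ≤ 4 * ‖f‖ := abs_le.2 ⟨by linarith, by linarith⟩
  calc ‖discLap n f x‖ = n ^ 2 * |f (x + 1) + f (x - 1) - 2 * f x| := by
        rw [discLap, Real.norm_eq_abs, abs_mul, abs_of_nonneg (by positivity)]
    _ ≤ n ^ 2 * (4 * ‖f‖) := by gcongr
    _ = 4 * n ^ 2 * ‖f‖ := by ring

theorem lipschitzWith_discLap : LipschitzWith (4 * n ^ 2) (discLap n) :=
  LipschitzWith.of_dist_le_mul fun f g => by
    rw [dist_eq_norm, dist_eq_norm, ← discLap_sub]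
    exact_mod_cast norm_discLap_le n (f - g)

end DiscreteLaplacian

noncomputable def phiExt (r : ℝ) : ℝ := max r 0 / (1 + max r 0)

theorem phiExt_nonneg (r : ℝ) : 0 ≤ phiExt r := by
  unfold phiExt; have := le_max_right r 0; positivity

theorem phiExt_le_one (r : ℝ) : phiExt r ≤ 1 := by
  unfold phiExt; rw [div_le_one (by positivity)]; linarith

theorem phiExt_of_nonpos {r : ℝ} (hr : r ≤ 0) : phiExt r = 0 := by
  simp [phiExt, max_eq_right hr]

theorem lipschitzWith_phiExt : LipschitzWith 1 phiExt := by
  refine LipschitzWith.of_dist_le_mul fun a b => ?_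
  rw [NNReal.coe_one, one_mul, Real.dist_eq, Real.dist_eq]
  have hA := le_max_right a 0; have hB := le_max_right b 0
  set A := max a 0; set B := max b 0
  have hAB : |A - B| ≤ |a - b| := abs_max_sub_max_le_abs a b 0
  calc |A / (1 + A) - B / (1 + B)| = |A - B| / ((1 + A) * (1 + B)) := by
        rw [div_sub_div _ _ (by positivity) (by positivity), abs_div,
          abs_of_pos (by positivity : 0 < (1 + A) * (1 + B))]
        ring_nf
    _ ≤ |A - B| := div_le_self (abs_nonneg _) (by nlinarith)
    _ ≤ |a - b| := hAB

noncomputable def phinExt (α : ℝ) (n : ℕ) (r : ℝ) : ℝ := (n : ℝ) ^ α * phiExt ((n : ℝ) ^ α * r)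

section PhinExt

variable (α : ℝ) (n : ℕ)

theorem phin_eq_phinExt {r : ℝ} (hr : 0 ≤ r) : phin α n r = phinExt α n r := by
  have : 0 ≤ (n : ℝ) ^ α * r := mul_nonneg (by positivity) hr
  simp [phin, phinExt, phiExt, max_eq_left this]

theorem phinExt_nonneg (r : ℝ) : 0 ≤ phinExt α n r :=
  mul_nonneg (by positivity) (phiExt_nonneg _)

theorem phinExt_of_nonpos {r : ℝ} (hr : r ≤ 0) : phinExt α n r = 0 := by
  rw [phinExt, phiExt_of_nonpos (mul_nonpos_of_nonneg_of_nonpos (by positivity) hr), mul_zero]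

theorem abs_phinExt_le (r : ℝ) : |phinExt α n r| ≤ (n : ℝ) ^ α := by
  rw [abs_of_nonneg (phinExt_nonneg α n r)]
  exact mul_le_of_le_one_right (by positivity) (phiExt_le_one _)

theorem lipschitzWith_phinExt :
    LipschitzWith (‖(n : ℝ) ^ α‖₊ ^ 2) (phinExt α n) := by
  have h := (lipschitzWith_smul ((n : ℝ) ^ α)).comp
    (lipschitzWith_phiExt.comp (lipschitzWith_smul ((n : ℝ) ^ α)))
  rw [one_mul, ← sq] at h
  exact h

end PhinExt

noncomputable def schemeFieldExt (α : ℝ) (n : ℕ) (u : ZMod n → ℝ) : ZMod n → ℝ :=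
  discLap n (phinExt α n ∘ u)

section SchemeField

variable (α : ℝ) (n : ℕ)

theorem schemeFieldExt_eq_discLap_phin {u : ZMod n → ℝ} (hu : ∀ x, 0 ≤ u x) :
    schemeFieldExt α n u = discLap n (fun y => phin α n (u y)) := by
  simp only [schemeFieldExt, Function.comp_def, phin_eq_phinExt α n (hu _)]

theorem schemeFieldExt_nonneg_of_neg {u : ZMod n → ℝ} {x : ZMod n} (hx : u x < 0) :
    0 ≤ schemeFieldExt α n u x :=
  discLap_nonneg_of_forall_le n fun y => by
    simp only [Function.comp_apply, phinExt_of_nonpos α n hx.le, phinExt_nonneg]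

variable [NeZero n]

theorem lipschitzWith_schemeFieldExt :
    LipschitzWith (4 * n ^ 2 * ‖(n : ℝ) ^ α‖₊ ^ 2) (schemeFieldExt α n) :=
  (lipschitzWith_discLap n).comp (lipschitzWith_phinExt α n).comp_left_pi

theorem norm_schemeFieldExt_le (u : ZMod n → ℝ) :
    ‖schemeFieldExt α n u‖ ≤ 4 * n ^ 2 * (n : ℝ) ^ α := by
  have h : ‖phinExt α n ∘ u‖ ≤ (n : ℝ) ^ α :=
    (pi_norm_le_iff_of_nonneg (by positivity)).2 fun y => abs_phinExt_le α n (u y)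
  exact (norm_discLap_le n _).trans (by gcongr)

end SchemeField

theorem discrete_scheme_global_existence_uniqueness_general
    (α : ℝ) (n : ℕ) [NeZero n]
    (u₀ : ZMod n → ℝ) (h₀ : ∀ x, 0 ≤ u₀ x) :
    ∃ u : ℝ → ZMod n → ℝ,
      (u 0 = u₀ ∧ (∀ t, 0 ≤ t → ∀ x, 0 ≤ u t x) ∧
        ∀ t, 0 ≤ t → ∀ x : ZMod n,
          HasDerivWithinAt (fun s => u s x)
            (discLap n (fun y => phin α n (u t y)) x) (Set.Ici 0) t) ∧
      ∀ v : ℝ → ZMod n → ℝ,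
        (v 0 = u₀ ∧ (∀ t, 0 ≤ t → ∀ x, 0 ≤ v t x) ∧
          ∀ t, 0 ≤ t → ∀ x : ZMod n,
            HasDerivWithinAt (fun s => v s x)
              (discLap n (fun y => phin α n (v t y)) x) (Set.Ici 0) t) →
        ∀ t, 0 ≤ t → v t = u t := by
  have hK := lipschitzWith_schemeFieldExt α n
  obtain ⟨u, hu₀, hu⟩ :=
    exists_hasDerivWithinAt_Ici_of_lipschitzWith hK (norm_schemeFieldExt_le α n) u₀
  have hu_nonneg :=
    nonneg_of_hasDerivWithinAt_Ici (fun _ _ => schemeFieldExt_nonneg_of_neg α n) hu (hu₀ ▸ h₀)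
  have hsol : ∀ w : ℝ → ZMod n → ℝ, (∀ t, 0 ≤ t → ∀ x, 0 ≤ w t x) → ∀ t, 0 ≤ t →
      (HasDerivWithinAt w (schemeFieldExt α n (w t)) (Ici 0) t ↔
        ∀ x, HasDerivWithinAt (fun s => w s x) (discLap n (fun y => phin α n (w t y)) x)
          (Ici 0) t) := fun w hw t ht => by
    rw [schemeFieldExt_eq_discLap_phin α n (hw t ht), hasDerivWithinAt_pi]
  refine ⟨u, ⟨hu₀, hu_nonneg, fun t ht => (hsol u hu_nonneg t ht).1 (hu t ht)⟩, ?_⟩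
  rintro v ⟨hv₀, hv_nonneg, hv⟩ t ht
  exact eqOn_Ici_of_hasDerivWithinAt_of_lipschitzWith hK
    (fun s hs => (hsol v hv_nonneg s hs).2 (hv s hs)) hu (hv₀.trans hu₀.symm) ht

/-- for every nonnegative initial condition `u₀ : ℤ/nℤ → [0,∞)` there is a
unique global solution of the discrete scheme `(d/dt) u_t(x) = Δ_n(φ_n ∘ u_t)(x)` on
`[0,∞)` with `u_0 = u₀`, taking values in `[0,∞)`. -/
theorem discrete_scheme_global_existence_uniqueness
    (α : ℝ) (hα : 0 ≤ α) (n : ℕ) [NeZero n]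
    (u₀ : ZMod n → ℝ) (h₀ : ∀ x, 0 ≤ u₀ x) :
    ∃ u : ℝ → ZMod n → ℝ,
      (u 0 = u₀ ∧ (∀ t, 0 ≤ t → ∀ x, 0 ≤ u t x) ∧
        ∀ t, 0 ≤ t → ∀ x : ZMod n,
          HasDerivWithinAt (fun s => u s x)
            (discLap n (fun y => phin α n (u t y)) x) (Set.Ici 0) t) ∧
      ∀ v : ℝ → ZMod n → ℝ,
        (v 0 = u₀ ∧ (∀ t, 0 ≤ t → ∀ x, 0 ≤ v t x) ∧
          ∀ t, 0 ≤ t → ∀ x : ZMod n,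
            HasDerivWithinAt (fun s => v s x)
              (discLap n (fun y => phin α n (v t y)) x) (Set.Ici 0) t) →
        ∀ t, 0 ≤ t → v t = u t :=
  discrete_scheme_global_existence_uniqueness_general α n u₀ h₀
end

section
/- Fix α ≥ 0 and a positive integer n. Let u : [0,∞) → (ℤ/nℤ → [0,∞)) be a solution of the discrete scheme, i.e. for every x ∈ ℤ/nℤ the map t ↦ u_t(x) is differentiable with (d/dt) u_t(x) = Δ_n(φ_n ∘ u_t)(x) for all t ≥ 0. Then for every t ≥ 0, min_{x ∈ ℤ/nℤ} u_0(x) ≤ min_{x ∈ ℤ/nℤ} u_t(x) ≤ max_{x ∈ ℤ/nℤ} u_t(x) ≤ max_{x ∈ ℤ/nℤ} u_0(x) (weak maximum principle). -/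
/-!
The maximum `M(t) = max_x u_t(x)` of a finite family of differentiable functions need not be
differentiable, but its upper right Dini derivative is bounded by the derivatives of the
coordinates attaining the maximum. At such a coordinate `φ_n ∘ u_t` is also maximal, since `φ_n`
is monotone on `[0, ∞)`, so the discrete Laplacian there is nonpositive. Hence `M` has
nonpositive Dini derivative and is nonincreasing by the fencing theorem for continuous functions;
the minimum is handled symmetrically.
-/

open Set Filter Topology

section FiniteMax

variable {ι : Type*} [Fintype ι] [Nonempty ι]

theorem eventually_slope_ciSup_lt {f : ι → ℝ → ℝ} {f' : ι → ℝ} {s r : ℝ}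
    (hf : ∀ i, HasDerivWithinAt (f i) (f' i) (Ici s) s)
    (hr : ∀ i, f i s = ⨆ j, f j s → f' i < r) :
    ∀ᶠ z in 𝓝[>] s, slope (fun z => ⨆ i, f i z) s z < r := by
  -- coordinates maximal at `s` are controlled by their derivative, the others by a gap
  have hbelow : ∀ i, ∀ᶠ z in 𝓝[>] s, f i z - (⨆ j, f j s) < r * (z - s) := by
    intro i
    by_cases hi : f i s = ⨆ j, f j s
    · have hslope : Tendsto (slope (f i) s) (𝓝[>] s) (𝓝 (f' i)) :=
        (hasDerivWithinAt_iff_tendsto_slope' (lt_irrefl s)).1 (hf i).Ioi_of_Ici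
      filter_upwards [hslope.eventually_lt_const (hr i hi), self_mem_nhdsWithin] with z hz hzs
      rwa [slope_def_field, div_lt_iff₀ (sub_pos.2 hzs), hi] at hz
    · have hgap : f i s - (⨆ j, f j s) - r * (s - s) < 0 := by
        have := lt_of_le_of_ne (le_ciSup (f := fun j => f j s) (Finite.bddAbove_range _) i) hi
        linarith
      have hcont : Tendsto (f i) (𝓝[>] s) (𝓝 (f i s)) :=
        ((hf i).continuousWithinAt.mono Ioi_subset_Ici_self).tendsto
      have hlin : Tendsto (fun z => r * (z - s)) (𝓝[>] s) (𝓝 (r * (s - s))) :=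
        ((tendsto_id.sub_const s).const_mul r).mono_left nhdsWithin_le_nhds
      have hlim := (hcont.sub_const (⨆ j, f j s)).sub hlin
      filter_upwards [hlim.eventually_lt_const hgap] with z hz
      linarith
  filter_upwards [eventually_all.2 hbelow, self_mem_nhdsWithin] with z hz hzs
  obtain ⟨j, hj⟩ := exists_eq_ciSup_of_finite (f := fun i => f i z)
  rw [slope_def_field, div_lt_iff₀ (sub_pos.2 hzs), ← hj]
  exact hz j

theorem le_of_hasDerivWithinAt_of_deriv_nonpos_at_max {u u' : ℝ → ι → ℝ} {M t : ℝ}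
    (hu : ∀ s, 0 ≤ s → ∀ i, HasDerivWithinAt (fun s => u s i) (u' s i) (Ici 0) s)
    (hmax : ∀ s, 0 ≤ s → ∀ i, (∀ j, u s j ≤ u s i) → u' s i ≤ 0)
    (h0 : ∀ i, u 0 i ≤ M) (ht : 0 ≤ t) (i : ι) : u t i ≤ M := by
  have hcont : ContinuousOn (fun s => ⨆ j, u s j) (Icc 0 t) := by
    simp_rw [← Finset.sup'_univ_eq_ciSup]
    exact fun s hs => ContinuousWithinAt.finset_sup'_apply _ fun j _ =>
      (hu s hs.1 j).continuousWithinAt.mono fun z hz => hz.1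
  have hbound : ∀ s ∈ Icc 0 t, ⨆ j, u s j ≤ M := by
    refine image_le_of_liminf_slope_right_le_deriv_boundary hcont (ciSup_le h0)
      continuousOn_const (fun s _ => hasDerivWithinAt_const s _ M) fun s hs r hr => ?_
    refine (eventually_slope_ciSup_lt (f := fun j z => u z j)
      (fun j => (hu s hs.1 j).mono (Ici_subset_Ici.2 hs.1)) fun j hj => ?_).frequently
    exact (hmax s hs.1 j fun k => hj ▸ le_ciSup (Finite.bddAbove_range _) k).trans_lt hr
  exact (le_ciSup (Finite.bddAbove_range _) i).trans (hbound t ⟨ht, le_rfl⟩)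

theorem le_of_hasDerivWithinAt_of_deriv_nonneg_at_min {u u' : ℝ → ι → ℝ} {m t : ℝ}
    (hu : ∀ s, 0 ≤ s → ∀ i, HasDerivWithinAt (fun s => u s i) (u' s i) (Ici 0) s)
    (hmin : ∀ s, 0 ≤ s → ∀ i, (∀ j, u s i ≤ u s j) → 0 ≤ u' s i)
    (h0 : ∀ i, m ≤ u 0 i) (ht : 0 ≤ t) (i : ι) : m ≤ u t i :=
  neg_le_neg_iff.1 <| le_of_hasDerivWithinAt_of_deriv_nonpos_at_max (u := -u) (u' := -u')
    (fun s hs j => (hu s hs j).neg)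
    (fun s hs j hj => neg_nonpos.2 <| hmin s hs j fun k => neg_le_neg_iff.1 (hj k))
    (fun j => neg_le_neg (h0 j)) ht i

end FiniteMax

theorem phin_monotoneOn (α : ℝ) (n : ℕ) : MonotoneOn (phin α n) (Ici 0) := by
  intro a ha b hb hab
  have hc : (0 : ℝ) ≤ (n : ℝ) ^ α := by positivity
  have hca : 0 ≤ (n : ℝ) ^ α * a := mul_nonneg hc ha
  have hcb : 0 ≤ (n : ℝ) ^ α * b := mul_nonneg hc hb
  unfold phin
  refine mul_le_mul_of_nonneg_left ?_ hc
  rw [div_le_div_iff₀ (by positivity) (by positivity)]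
  nlinarith [mul_le_mul_of_nonneg_left hab hc]

theorem discLap_nonpos_of_forall_le {n : ℕ} {f : ZMod n → ℝ} {x : ZMod n}
    (h : ∀ y, f y ≤ f x) : discLap n f x ≤ 0 :=
  mul_nonpos_of_nonneg_of_nonpos (sq_nonneg _) (by linarith [h (x + 1), h (x - 1)])

theorem discLap_nonneg_of_forall_ge {n : ℕ} {f : ZMod n → ℝ} {x : ZMod n}
    (h : ∀ y, f x ≤ f y) : 0 ≤ discLap n f x :=
  mul_nonneg (sq_nonneg _) (by linarith [h (x + 1), h (x - 1)])

theorem discrete_scheme_weak_maximum_principle_general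
    (α : ℝ) (n : ℕ) [NeZero n]
    (u : ℝ → ZMod n → ℝ)
    (hpos : ∀ t, 0 ≤ t → ∀ x, 0 ≤ u t x)
    (hu : ∀ t, 0 ≤ t → ∀ x : ZMod n,
      HasDerivWithinAt (fun s => u s x)
        (discLap n (fun y => phin α n (u t y)) x) (Set.Ici 0) t) :
    ∀ t, 0 ≤ t →
      sInf (Set.range (u 0)) ≤ sInf (Set.range (u t)) ∧
      sInf (Set.range (u t)) ≤ sSup (Set.range (u t)) ∧
      sSup (Set.range (u t)) ≤ sSup (Set.range (u 0)) := by
  intro t ht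
  have hmin : ∀ s, 0 ≤ s → ∀ x, (∀ y, u s x ≤ u s y) →
      0 ≤ discLap n (fun y => phin α n (u s y)) x := fun s hs x hx =>
    discLap_nonneg_of_forall_ge fun y => phin_monotoneOn α n (hpos s hs x) (hpos s hs y) (hx y)
  have hmax : ∀ s, 0 ≤ s → ∀ x, (∀ y, u s y ≤ u s x) →
      discLap n (fun y => phin α n (u s y)) x ≤ 0 := fun s hs x hx =>
    discLap_nonpos_of_forall_le fun y => phin_monotoneOn α n (hpos s hs y) (hpos s hs x) (hx y)
  refine ⟨le_ciInf fun x => ?_, ciInf_le_ciSup (Finite.bddBelow_range _) (Finite.bddAbove_range _),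
    ciSup_le fun x => ?_⟩
  · exact le_of_hasDerivWithinAt_of_deriv_nonneg_at_min hu hmin
      (fun y => ciInf_le (Finite.bddBelow_range _) y) ht x
  · exact le_of_hasDerivWithinAt_of_deriv_nonpos_at_max hu hmax
      (fun y => le_ciSup (Finite.bddAbove_range _) y) ht x

/-- weak maximum principle: if `u` is a nonnegative solution of the
discrete scheme `(d/dt) u_t(x) = Δ_n(φ_n ∘ u_t)(x)` on `[0,∞)`, then for every `t ≥ 0`,
`min_x u_0(x) ≤ min_x u_t(x) ≤ max_x u_t(x) ≤ max_x u_0(x)`. -/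
theorem discrete_scheme_weak_maximum_principle
    (α : ℝ) (hα : 0 ≤ α) (n : ℕ) [NeZero n]
    (u : ℝ → ZMod n → ℝ)
    (hpos : ∀ t, 0 ≤ t → ∀ x, 0 ≤ u t x)
    (hu : ∀ t, 0 ≤ t → ∀ x : ZMod n,
      HasDerivWithinAt (fun s => u s x)
        (discLap n (fun y => phin α n (u t y)) x) (Set.Ici 0) t) :
    ∀ t, 0 ≤ t →
      sInf (Set.range (u 0)) ≤ sInf (Set.range (u t)) ∧
      sInf (Set.range (u t)) ≤ sSup (Set.range (u t)) ∧
      sSup (Set.range (u t)) ≤ sSup (Set.range (u 0)) :=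
  discrete_scheme_weak_maximum_principle_general α n u hpos hu
end

section
/- Fix α ≥ 0 and a positive integer n. Let u : [0,∞) → (ℤ/nℤ → [0,∞)) be a solution of the discrete scheme, i.e. for every x ∈ ℤ/nℤ the map t ↦ u_t(x) is differentiable with (d/dt) u_t(x) = Δ_n(φ_n ∘ u_t)(x) for all t ≥ 0. Then the energy is non-increasing along the solution: for every t ≥ 0, ℰ_n(u_t) ≤ ℰ_n(u_0), where ℰ_n(w) = Σ_{x ∈ ℤ/nℤ} n·( φ_n(w(x+1)) − φ_n(w(x)) )². -/
/-- The energy `ℰ_n(w) = Σ_x n (φ_n(w(x+1)) − φ_n(w(x)))²`. -/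
noncomputable def energy (α : ℝ) (n : ℕ) [NeZero n] (w : ZMod n → ℝ) : ℝ :=
  ∑ x : ZMod n, (n : ℝ) * (phin α n (w (x + 1)) - phin α n (w x)) ^ 2

/-!
Along the scheme `∂ₜu = Δ_n(φ_n ∘ u)`, the chain rule gives
`∂ₜ(φ_n ∘ u) = φ_n'(u) · Δ_n(φ_n ∘ u)`, and summation by parts on the discrete circle turns
the derivative of the energy into
`-(2/n) Σ_x φ_n'(u(x)) · (Δ_n(φ_n ∘ u)(x))²`, which is `≤ 0` because `φ_n' ≥ 0`.
-/

open Finset Set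

lemma hasDerivAt_phin (α : ℝ) (n : ℕ) {s : ℝ} (hs : 1 + (n : ℝ) ^ α * s ≠ 0) :
    HasDerivAt (phin α n) ((n : ℝ) ^ α * (n : ℝ) ^ α / (1 + (n : ℝ) ^ α * s) ^ 2) s := by
  set c : ℝ := (n : ℝ) ^ α
  have hlin : HasDerivAt (fun u : ℝ => c * u) c s := by
    simpa using (hasDerivAt_id s).const_mul c
  refine ((hlin.div (hlin.const_add 1) hs).const_mul c).congr_deriv ?_
  ring

lemma ZMod.sum_sub_mul_sub_eq_neg_sum_mul {R : Type*} [CommRing R] {n : ℕ} [NeZero n]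
    (a b : ZMod n → R) :
    ∑ x, (a (x + 1) - a x) * (b (x + 1) - b x)
      = -∑ x, b x * (a (x + 1) + a (x - 1) - 2 * a x) := by
  have shift : ∑ x, (a (x + 1) - a x) * b (x + 1) = ∑ x, (a x - a (x - 1)) * b x :=
    Fintype.sum_equiv (Equiv.addRight 1) _ _ fun x => by simp
  simp_rw [mul_sub, sum_sub_distrib, shift, ← sum_sub_distrib, ← sum_neg_distrib]
  congr 1 with x
  ring

lemma hasDerivWithinAt_energy {α : ℝ} {n : ℕ} [NeZero n] {v : ℝ → ZMod n → ℝ}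
    {d : ZMod n → ℝ} {S : Set ℝ} {t : ℝ}
    (hv : ∀ x, HasDerivWithinAt (fun s => phin α n (v s x)) (d x) S t) :
    HasDerivWithinAt (fun s => energy α n (v s))
      (-(2 / n) * ∑ x, d x * discLap n (fun y => phin α n (v t y)) x) S t := by
  refine (HasDerivWithinAt.fun_sum (u := univ) fun x _ =>
    (((hv (x + 1)).fun_sub (hv x)).fun_pow 2).const_mul (n : ℝ)).congr_deriv ?_
  set g : ZMod n → ℝ := fun y => phin α n (v t y)
  have hn : (n : ℝ) ≠ 0 := NeZero.ne _
  calc ∑ x, (n : ℝ) * ((2 : ℕ) * (g (x + 1) - g x) ^ (2 - 1) * (d (x + 1) - d x))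
      = 2 * n * ∑ x, (g (x + 1) - g x) * (d (x + 1) - d x) := by
        rw [mul_sum]; congr 1 with x; push_cast; ring
    _ = -(2 / n) * ∑ x, d x * discLap n g x := by
        simp only [ZMod.sum_sub_mul_sub_eq_neg_sum_mul, discLap, mul_left_comm (d _), ← mul_sum]
        field_simp

theorem discrete_scheme_energy_estimate_general
    (α : ℝ) (n : ℕ) [NeZero n]
    (u : ℝ → ZMod n → ℝ)
    (hpos : ∀ t, 0 ≤ t → ∀ x, 0 ≤ u t x)
    (hu : ∀ t, 0 ≤ t → ∀ x : ZMod n,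
      HasDerivWithinAt (fun s => u s x)
        (discLap n (fun y => phin α n (u t y)) x) (Set.Ici 0) t) :
    ∀ t, 0 ≤ t → energy α n (u t) ≤ energy α n (u 0) := by
  set L : ℝ → ZMod n → ℝ := fun t => discLap n (fun y => phin α n (u t y))
  set w : ℝ → ZMod n → ℝ := fun t x =>
    (n : ℝ) ^ α * (n : ℝ) ^ α / (1 + (n : ℝ) ^ α * u t x) ^ 2
  have hE : ∀ t ∈ Ici (0 : ℝ), HasDerivWithinAt (fun s => energy α n (u s))
      (-(2 / n) * ∑ x, w t x * L t x * L t x) (Ici 0) t := fun t ht =>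
    hasDerivWithinAt_energy fun x =>
      (hasDerivAt_phin α n (by have := hpos t ht x; positivity)).comp_hasDerivWithinAt t
        (hu t ht x)
  have hE_nonpos : ∀ t, -(2 / n) * ∑ x, w t x * L t x * L t x ≤ 0 := fun t =>
    mul_nonpos_of_nonpos_of_nonneg (by simp only [neg_nonpos]; positivity)
      (sum_nonneg fun x _ => by
        rw [mul_assoc]; exact mul_nonneg (by positivity) (mul_self_nonneg _))
  have hanti : AntitoneOn (fun s => energy α n (u s)) (Ici 0) :=
    antitoneOn_of_hasDerivWithinAt_nonpos (convex_Ici 0)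
      (fun t ht => (hE t ht).continuousWithinAt)
      (fun t ht => (hE t (interior_subset ht)).mono interior_subset) (fun t _ => hE_nonpos t)
  exact fun t ht => hanti self_mem_Ici ht ht

/-- energy estimate: if `u` is a nonnegative solution of the discrete
scheme `(d/dt) u_t(x) = Δ_n(φ_n ∘ u_t)(x)` on `[0,∞)`, then the energy is non-increasing:
`ℰ_n(u_t) ≤ ℰ_n(u_0)` for every `t ≥ 0`. -/
theorem discrete_scheme_energy_estimate
    (α : ℝ) (hα : 0 ≤ α) (n : ℕ) [NeZero n]
    (u : ℝ → ZMod n → ℝ)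
    (hpos : ∀ t, 0 ≤ t → ∀ x, 0 ≤ u t x)
    (hu : ∀ t, 0 ≤ t → ∀ x : ZMod n,
      HasDerivWithinAt (fun s => u s x)
        (discLap n (fun y => phin α n (u t y)) x) (Set.Ici 0) t) :
    ∀ t, 0 ≤ t → energy α n (u t) ≤ energy α n (u 0) :=
  discrete_scheme_energy_estimate_general α n u hpos hu
end
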